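/- arXiv:2312.01116 — 3 statements merged into one kernel-verified Lean document; each statement's English description precedes it below -/
import Mathlib

section
/- Let k ≥ 2 be an integer, A a nontrivial closed class of decision tables from M_k^∞, ψ a bounded complexity measure, and suppose the function L_{ψ,A} is everywhere defined. Then the function H^∞_{ψ,A} is everywhere defined and, for any n ∈ ℕ such that L_{ψ,A}(n) > 0, H^∞_{ψ,A}(n) ≥ log_k L_{ψ,A}(n). -/
open Classical

noncomputable section

/-- A decision table with many-valued decisions over `E_k = {0,…,k-1}`.
Columns are labeled with attributes `f_i` identified with their indices `i : ℕ`;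
a row is a function `ℕ → ℕ` supported on the attribute set, with values `< k`;
each row is labeled with a nonempty finite set of decisions. -/
structure Table (k : ℕ) where
  attrs : Finset ℕ
  rows : Finset (ℕ → ℕ)
  dec : (ℕ → ℕ) → Finset ℕ
  rows_mem : ∀ r ∈ rows, (∀ i ∈ attrs, r i < k) ∧ (∀ i ∉ attrs, r i = 0)
  dec_nonempty : ∀ r ∈ rows, (dec r).Nonempty

namespace Table

variable {k : ℕ}

/-- a row satisfies a word (a list of (attribute, value) pairs) -/
def rowSat (r : ℕ → ℕ) (α : List (ℕ × ℕ)) : Prop := ∀ q ∈ α, r q.1 = q.2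

/-- the word belongs to `Ω_k(T)` -/
def wordOk (T : Table k) (α : List (ℕ × ℕ)) : Prop := ∀ q ∈ α, q.1 ∈ T.attrs ∧ q.2 < k

/-- the subtable `Tα` -/
def applyWord (T : Table k) (α : List (ℕ × ℕ)) : Table k where
  attrs := T.attrs
  rows := T.rows.filter (fun r => rowSat r α)
  dec := T.dec
  rows_mem := fun r hr => T.rows_mem r (Finset.mem_filter.mp hr).1
  dec_nonempty := fun r hr => T.dec_nonempty r (Finset.mem_filter.mp hr).1

/-- `T ∈ M_k^{∞c}` : the table has a common decision -/
def hasCommon (T : Table k) : Prop := ∃ d : ℕ, ∀ r ∈ T.rows, d ∈ T.dec r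

/-- `N(T)` : number of rows -/
def NT (T : Table k) : ℕ := T.rows.card

/-- `W(T)` : number of columns (`0` for the empty table `Λ`) -/
def WT (T : Table k) : ℕ := if T.rows = ∅ then 0 else T.attrs.card

/-- the closure `[T]` of `T` under removal of columns and changing of decisions:
`Q = J(ν, I(D,T))` for some `D ⊆ At(T)` and some `ν` (the decision labeling of `Q`
on its rows is arbitrary, i.e. is the arbitrary `ν` with nonempty finite values). -/
def closureT (T : Table k) : Set (Table k) :=
  {Q | ∃ D : Finset ℕ, D ⊆ T.attrs ∧ Q.attrs = T.attrs \ D ∧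
      Q.rows = T.rows.image (fun r i => if i ∈ T.attrs \ D then r i else 0)}

end Table

/-- a closed class: `[A] = A` -/
def IsClosedClass {k : ℕ} (A : Set (Table k)) : Prop := ∀ T ∈ A, Table.closureT T ⊆ A

/-- a nontrivial class: contains nonempty tables -/
def NontrivialClass {k : ℕ} (A : Set (Table k)) : Prop := ∃ T ∈ A, T.rows.Nonempty

/-- the part of a `k`-decision tree below one edge leaving the root -/
inductive DTree (k : ℕ) : Type
  | leaf (d : ℕ) : DTree k
  | node (a : ℕ) (n : ℕ) (lab : Fin (n + 1) → ℕ) (ch : Fin (n + 1) → DTree k) : DTree k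

namespace DTree

variable {k : ℕ}

/-- the set of pairs (π(τ), terminal decision) over complete paths τ -/
def paths : DTree k → Set (List (ℕ × ℕ) × ℕ)
  | leaf d => {([], d)}
  | node a _ lab ch =>
      ⋃ i, (fun p : List (ℕ × ℕ) × ℕ => ((a, lab i) :: p.1, p.2)) '' paths (ch i)

/-- edge labels belong to `E_k` -/
def wf : DTree k → Prop
  | leaf _ => True
  | node _ _ lab ch => (∀ i, lab i < k) ∧ ∀ i, wf (ch i)

/-- edges leaving any node are labeled with pairwise different numbers -/
def det : DTree k → Prop
  | leaf _ => True
  | node _ _ lab ch => Function.Injective lab ∧ ∀ i, det (ch i)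

/-- the set of attributes attached to nodes -/
def attrs : DTree k → Finset ℕ
  | leaf _ => ∅
  | node a _ _ ch => insert a (Finset.univ.biUnion fun i => attrs (ch i))

end DTree

/-- a `k`-decision tree: an unlabeled root with `n+1` unlabeled edges leaving it -/
structure KTree (k : ℕ) where
  n : ℕ
  sub : Fin (n + 1) → DTree k

namespace KTree

variable {k : ℕ}

def paths (Γ : KTree k) : Set (List (ℕ × ℕ) × ℕ) := ⋃ i, (Γ.sub i).paths

def wf (Γ : KTree k) : Prop := ∀ i, (Γ.sub i).wf

def attrs (Γ : KTree k) : Finset ℕ := Finset.univ.biUnion fun i => (Γ.sub i).attrs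

end KTree

/-- partially bounded complexity measure on words over `P` -/
structure PBCM where
  toFun : List ℕ → ℕ
  pos : ∀ α, toFun α = 0 ↔ α = []
  perm : ∀ α β, List.Perm α β → toFun α = toFun β
  mono : ∀ α β, toFun α ≤ toFun (α ++ β)
  subadd : ∀ α β, toFun (α ++ β) ≤ toFun α + toFun β

/-- bounded complexity measure -/
structure BCM extends PBCM where
  bdd : ∀ α, α.length ≤ toFun α

/-- extension of ψ to words over pairs `(f_i, δ)` -/
def PBCM.onWord (ψ : PBCM) (α : List (ℕ × ℕ)) : ℕ := ψ.toFun (α.map Prod.fst)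

/-- extension of ψ to finite sets of attributes -/
def PBCM.onSet (ψ : PBCM) (s : Finset ℕ) : ℕ := ψ.toFun (s.sort (· ≤ ·))

/-- the depth `h` -/
def depthCM : BCM where
  toFun := List.length
  pos := fun α => List.length_eq_zero_iff
  perm := fun _ _ h => h.length_eq
  mono := fun α β => by simp
  subadd := fun α β => by simp
  bdd := fun _ => le_rfl

/-- `ψ(Γ)` : complexity of a decision tree -/
def treeComp {k : ℕ} (ψ : PBCM) (Γ : KTree k) : ℕ :=
  sSup {c | ∃ p ∈ Γ.paths, ψ.onWord p.1 = c}

/-- `Γ` is a nondeterministic decision tree for the (nonempty) table `T` -/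
def isNDT {k : ℕ} (T : Table k) (Γ : KTree k) : Prop :=
  T.rows.Nonempty ∧ Γ.wf ∧ Γ.attrs ⊆ T.attrs ∧
  (∀ r ∈ T.rows, ∃ p ∈ Γ.paths, Table.rowSat r p.1) ∧
  (∀ p ∈ Γ.paths, (T.applyWord p.1).rows = ∅ ∨ ∀ r ∈ (T.applyWord p.1).rows, p.2 ∈ T.dec r)

/-- `Γ` is a deterministic decision tree for `T` -/
def isDDT {k : ℕ} (T : Table k) (Γ : KTree k) : Prop :=
  isNDT T Γ ∧ Γ.n = 0 ∧ ∀ i, (Γ.sub i).det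

/-- `ψ^a(T)` -/
def psiA {k : ℕ} (ψ : PBCM) (T : Table k) : ℕ :=
  sInf {c | ∃ Γ : KTree k, isNDT T Γ ∧ treeComp ψ Γ = c}

/-- `ψ^d(T)` -/
def psiD {k : ℕ} (ψ : PBCM) (T : Table k) : ℕ :=
  sInf {c | ∃ Γ : KTree k, isDDT T Γ ∧ treeComp ψ Γ = c}

/-- `m_ψ(T)` -/
def mpsi {k : ℕ} (ψ : PBCM) (T : Table k) : ℕ :=
  if T.rows = ∅ then 0 else T.attrs.sup fun i => ψ.toFun [i]

/-- `W_ψ(T)` -/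
def Wpsi {k : ℕ} (ψ : PBCM) (T : Table k) : ℕ :=
  if T.rows = ∅ then 0 else ψ.onSet T.attrs

/-- a tuple `δ̄ ∈ E_k^{|At(T)|}` -/
def validTuple {k : ℕ} (T : Table k) (δ : ℕ → ℕ) : Prop :=
  (∀ i ∈ T.attrs, δ i < k) ∧ ∀ i ∉ T.attrs, δ i = 0

/-- `M_ψ(T, δ̄)` -/
def MpsiAt {k : ℕ} (ψ : PBCM) (T : Table k) (δ : ℕ → ℕ) : ℕ :=
  sInf {p | ∃ s : Finset ℕ, s ⊆ T.attrs ∧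
    (T.applyWord ((s.sort (· ≤ ·)).map fun i => (i, δ i))).hasCommon ∧ ψ.onSet s = p}

/-- `M_ψ(T)` -/
def Mpsi {k : ℕ} (ψ : PBCM) (T : Table k) : ℕ :=
  if T.hasCommon then 0 else sSup {p | ∃ δ, validTuple T δ ∧ MpsiAt ψ T δ = p}

/-- `U` is a `(ψ,n)`-cover of `T` -/
def isCover {k : ℕ} (ψ : PBCM) (n : ℕ) (T : Table k) (U : Finset (List (ℕ × ℕ))) : Prop :=
  (∀ α ∈ U, T.wordOk α ∧ ψ.onWord α ≤ n) ∧ ∀ r ∈ T.rows, ∃ α ∈ U, Table.rowSat r α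

/-- `U` is an irreducible `(ψ,n)`-cover of `T` -/
def isIrredCover {k : ℕ} (ψ : PBCM) (n : ℕ) (T : Table k) (U : Finset (List (ℕ × ℕ))) : Prop :=
  isCover ψ n T U ∧ ∀ V ⊂ U, ¬ isCover ψ n T V

/-- `l_ψ(T,n)` : maximum cardinality of an irreducible `(ψ,n)`-cover -/
def lpsi {k : ℕ} (ψ : PBCM) (T : Table k) (n : ℕ) : ℕ :=
  sSup {c | ∃ U, isIrredCover ψ n T U ∧ U.card = c}

/-- the set `{ψ^d(T) : T ∈ A, ψ^a(T) ≤ n}`; `H^∞_{ψ,A}(n)` is defined iff this set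
is finite, and is then its maximum -/
def HSet {k : ℕ} (ψ : PBCM) (A : Set (Table k)) (n : ℕ) : Set ℕ :=
  {c | ∃ T ∈ A, psiA ψ T ≤ n ∧ psiD ψ T = c}

/-- `H^∞_{ψ,A}(n)` (as the max = sSup of the finite set `HSet ψ A n`) -/
def Hfun {k : ℕ} (ψ : PBCM) (A : Set (Table k)) (n : ℕ) : ℕ := sSup (HSet ψ A n)

/-- the set `{l_ψ(T,n) : T ∈ A}` -/
def LSet {k : ℕ} (ψ : PBCM) (A : Set (Table k)) (n : ℕ) : Set ℕ :=
  {c | ∃ T ∈ A, lpsi ψ T n = c}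

/-- `L_{ψ,A}(n)` -/
def Lfun {k : ℕ} (ψ : PBCM) (A : Set (Table k)) (n : ℕ) : ℕ := sSup (LSet ψ A n)

/-- `H_D` for an infinite `D ⊆ ℕ` : `H_D(n)` is the largest element of `D` that is `≤ n`
(and `0` if there is none) -/
def HDfun (D : Set ℕ) (n : ℕ) : ℕ := sSup {d | d ∈ D ∧ d ≤ n}

/-- a complete table from `M_2^∞` -/
def isComplete (Q : Table 2) : Prop := Q.NT = 2 ^ Q.attrs.card

/-- `Z(T)` : maximum number of columns in a complete table from `[T]` (`0` if none) -/
def Zt (T : Table 2) : ℕ := sSup {c | ∃ Q ∈ Table.closureT T, isComplete Q ∧ Q.WT = c}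

/-- the set `{Z(T) : T ∈ A_ψ(n)}` -/
def ZSet (ψ : PBCM) (A : Set (Table 2)) (n : ℕ) : Set ℕ :=
  {c | ∃ T ∈ A, mpsi ψ T ≤ n ∧ Zt T = c}

/-- `Z_{ψ,A}(n)` -/
def Zfun (ψ : PBCM) (A : Set (Table 2)) (n : ℕ) : ℕ := sSup (ZSet ψ A n)

/-- annihilating word for `T` -/
def isAnnih (T : Table 2) (α : List (ℕ × ℕ)) : Prop :=
  T.wordOk α ∧ (∀ p ∈ α, ∀ q ∈ α, p.1 = q.1 → p.2 = q.2) ∧ (T.applyWord α).rows = ∅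

/-- irreducible annihilating word for `T` -/
def isIrredAnnih (T : Table 2) (α : List (ℕ × ℕ)) : Prop :=
  isAnnih T α ∧ ∀ β, β.Sublist α → β ≠ α → ¬ isAnnih T β

/-- `G(T)` : maximum length of an irreducible annihilating word (`0` if none) -/
def Gt (T : Table 2) : ℕ := sSup {c | ∃ α, isIrredAnnih T α ∧ α.length = c}

/-- the set `{G(T) : T ∈ A_ψ(n)}` -/
def GSet (ψ : PBCM) (A : Set (Table 2)) (n : ℕ) : Set ℕ :=
  {c | ∃ T ∈ A, mpsi ψ T ≤ n ∧ Gt T = c}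

/-- `G_{ψ,A}(n)` -/
def Gfun (ψ : PBCM) (A : Set (Table 2)) (n : ℕ) : ℕ := sSup (GSet ψ A n)

/-! ### The tables `T_k` and `T_k^*` built from the triangle-shaped graph `G_k` -/

/-- `m(k) = k(k+1)/2` : number of nodes of `G_k` -/
def mnum (k : ℕ) : ℕ := k * (k + 1) / 2

/-- the layer of node `i` of `G_k` : the unique `L` with `m(L-1) < i ≤ m(L)` -/
def layer (i : ℕ) : ℕ := sInf {L | i ≤ mnum L}

/-- left child `l(i) = i + layer i`; right child `p(i) = i + layer i + 1` -/
def lchild (i : ℕ) : ℕ := i + layer i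

def rchild (i : ℕ) : ℕ := i + layer i + 1

/-- the map `ν_k : E_2^{m(k)} → P(ω)` -/
def nuk (k : ℕ) (δ : ℕ → ℕ) : Finset ℕ :=
  (Finset.range (mnum k + 1)).filter fun i =>
    if i = 0 then δ 1 = 0
    else if layer i = k then δ i = 1
    else δ i = 1 ∧ δ (lchild i) = 0 ∧ δ (rchild i) = 0

/-- all tuples over `E_k` supported on the attribute set `s` -/
def allRows (k : ℕ) (s : Finset ℕ) : Finset (ℕ → ℕ) :=
  (s.pi fun _ => Finset.range k).image fun f i => if h : i ∈ s then f i h else 0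

/-- the table with attribute set `s`, all possible rows, and decision labeling `d` -/
def fullTable (k : ℕ) (s : Finset ℕ) (d : (ℕ → ℕ) → Finset ℕ) : Table k where
  attrs := s
  rows := allRows k s
  dec := fun r => if (d r).Nonempty then d r else {0}
  rows_mem := by
    intro r hr
    simp only [allRows, Finset.mem_image] at hr
    obtain ⟨f, hf, rfl⟩ := hr
    refine ⟨fun i hi => ?_, fun i hi => ?_⟩
    · have h := (Finset.mem_pi.mp hf) i hi
      simp only [Finset.mem_range] at h
      simpa [hi] using h
    · simp [hi]
  dec_nonempty := by
    intro r _
    by_cases h : (d r).Nonempty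
    · simp [h]
    · simp [h]

/-- the complete table `T_k` with `m(k)` columns `f_1, …, f_{m(k)}` and `2^{m(k)}` rows,
each row `δ̄` labeled with `ν_k(δ̄)` (which is always nonempty) -/
def Tk (k : ℕ) : Table 2 := fullTable 2 (Finset.Icc 1 (mnum k)) (nuk k)

/-- the `j`-th node of the complete path of `G_k` determined by the choices `c` -/
def pathNode (c : ℕ → Bool) : ℕ → ℕ
  | 0 => 1
  | j + 1 => if c j then lchild (pathNode c j) else rchild (pathNode c j)

/-- `T_k^*` : the subtable of `T_k` whose rows are exactly the characteristic tuples
of complete paths of `G_k` -/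
def Tstar (k : ℕ) : Table 2 where
  attrs := (Tk k).attrs
  rows := (Tk k).rows.filter fun r =>
    ∃ c : ℕ → Bool, ∀ i ∈ Finset.Icc 1 (mnum k), (r i = 1 ↔ ∃ j < k, pathNode c j = i)
  dec := (Tk k).dec
  rows_mem := fun r hr => (Tk k).rows_mem r (Finset.mem_filter.mp hr).1
  dec_nonempty := fun r hr => (Tk k).dec_nonempty r (Finset.mem_filter.mp hr).1

/-- `r(T)` for a subtable `T` of `T_k^*` : the number of distinct decision sets
`ν_k(δ̄)` among the rows `δ̄` of `T` -/
def rnum (k : ℕ) (T : Table 2) : ℕ := (T.rows.image (nuk k)).card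

end

/-!
The words along the paths of a nondeterministic tree of complexity at most `n` form a
`(ψ,n)`-cover whose subtables have common decisions, and it contains an irreducible one.
Querying every attribute of every word of such a cover `U` gives a deterministic tree of
complexity at most `n · |U|` by subadditivity of `ψ`. Hence `ψ^d(T) ≤ n · L(n)` whenever
`ψ^a(T) ≤ n`, so `H^∞` is everywhere defined.

For the lower bound take `T ∈ A` with an irreducible cover `U` of size `L(n)` and label every
row by the set of words of `U` it satisfies. The relabelled table stays in `A`, and the words
of `U` form a nondeterministic tree of complexity at most `n` for it. Each word `α` of `U` has
a row satisfying no other word of `U`, so in a deterministic tree for the relabelled table the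
path of that row ends in the decision `α`: the tree has at least `L(n)` paths. As `ψ` bounds
length, a deterministic tree of complexity `h` has at most `k ^ h` paths.
-/

lemma List.finite_setOf_length_le_of_forall_mem {α : Type*} (s : Finset α) (n : ℕ) :
    {l : List α | l.length ≤ n ∧ ∀ a ∈ l, a ∈ s}.Finite := by
  refine ((List.finite_length_le s n).image (List.map Subtype.val)).subset ?_
  rintro l ⟨hlen, hs⟩
  lift l to List s using hs
  exact ⟨l, by simpa using hlen, rfl⟩

lemma Nat.sSup_mem_of_pos {s : Set ℕ} (hs : BddAbove s) (hpos : 0 < sSup s) : sSup s ∈ s := by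
  refine Nat.sSup_mem (Set.nonempty_iff_ne_empty.mpr fun hempty => ?_) hs
  simp [hempty] at hpos

lemma PBCM.toFun_flatten_le (ψ : PBCM) (l : List (List ℕ)) :
    ψ.toFun l.flatten ≤ (l.map ψ.toFun).sum := by
  induction l with
  | nil => simp [(ψ.pos []).mpr rfl]
  | cons x t ih => simpa using (ψ.subadd x t.flatten).trans (Nat.add_le_add_left ih _)

namespace Table

variable {k : ℕ}

lemma rowSat_of_agree {r r' : ℕ → ℕ} {w α : List (ℕ × ℕ)} (hr : rowSat r w) (hr' : rowSat r' w)
    (hα : rowSat r α) (hsub : ∀ q ∈ α, q.1 ∈ w.map Prod.fst) : rowSat r' α := by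
  intro q hq
  obtain ⟨q', hq', hfst⟩ := List.mem_map.mp (hsub q hq)
  rw [← hfst, hr' q' hq', ← hr q' hq', hfst, hα q hq]

lemma hasCommon_applyWord_of_subset {T : Table k} {w α : List (ℕ × ℕ)}
    (hsub : (T.applyWord w).rows ⊆ (T.applyWord α).rows) (hα : (T.applyWord α).hasCommon) :
    (T.applyWord w).hasCommon :=
  let ⟨d, hd⟩ := hα
  ⟨d, fun r hr => hd r (hsub hr)⟩

noncomputable def commonDecision (T : Table k) : ℕ := if h : T.hasCommon then h.choose else 0

lemma commonDecision_mem {T : Table k} (h : T.hasCommon) {r : ℕ → ℕ} (hr : r ∈ T.rows) :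
    T.commonDecision ∈ T.dec r := by
  rw [commonDecision, dif_pos h]
  exact h.choose_spec r hr

lemma mem_closureT_of_rows_eq {Q T : Table k} (hattrs : Q.attrs = T.attrs)
    (hrows : Q.rows = T.rows) : Q ∈ T.closureT := by
  refine ⟨∅, Finset.empty_subset _, by rw [hattrs, Finset.sdiff_empty], ?_⟩
  rw [hrows, Finset.sdiff_empty]
  conv_lhs => rw [← Finset.image_id (s := T.rows)]
  refine Finset.image_congr fun r hr => funext fun i => ?_
  by_cases hi : i ∈ T.attrs
  · simp [hi]
  · simp [hi, (T.rows_mem r hr).2 i hi]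

/-- The paper's `J(ν, T)` with `ν(δ̄)` the set of words of `U` satisfied by `δ̄`. -/
noncomputable def labelByCover (T : Table k) (U : Finset (List (ℕ × ℕ)))
    (hU : ∀ r ∈ T.rows, ∃ α ∈ U, rowSat r α) : Table k where
  attrs := T.attrs
  rows := T.rows
  dec r := (U.filter fun α => rowSat r α).image Encodable.encode
  rows_mem := T.rows_mem
  dec_nonempty r hr :=
    let ⟨_, hα, hsat⟩ := hU r hr
    ⟨_, Finset.mem_image_of_mem _ (Finset.mem_filter.mpr ⟨hα, hsat⟩)⟩

lemma hasCommon_labelByCover {T : Table k} {U : Finset (List (ℕ × ℕ))}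
    (hU : ∀ r ∈ T.rows, ∃ α ∈ U, rowSat r α) {α : List (ℕ × ℕ)} (hα : α ∈ U) :
    ((T.labelByCover U hU).applyWord α).hasCommon :=
  ⟨Encodable.encode α, fun _ hr =>
    Finset.mem_image_of_mem _ (Finset.mem_filter.mpr ⟨hα, (Finset.mem_filter.mp hr).2⟩)⟩

end Table

namespace DTree

variable {k : ℕ}

lemma mem_paths_node {a n : ℕ} {lab : Fin (n + 1) → ℕ} {ch : Fin (n + 1) → DTree k}
    {p : List (ℕ × ℕ) × ℕ} :
    p ∈ (node a n lab ch).paths ↔ ∃ i, ∃ q ∈ (ch i).paths, p = ((a, lab i) :: q.1, q.2) := by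
  simp only [paths, Set.mem_iUnion, Set.mem_image, eq_comm]

lemma paths_nonempty (t : DTree k) : t.paths.Nonempty := by
  induction t with
  | leaf d => exact ⟨([], d), rfl⟩
  | node a n lab ch ih =>
    obtain ⟨p, hp⟩ := ih 0
    exact ⟨_, mem_paths_node.mpr ⟨0, p, hp, rfl⟩⟩

lemma paths_finite (t : DTree k) : t.paths.Finite := by
  induction t with
  | leaf d => exact Set.finite_singleton _
  | node a n lab ch ih => exact Set.finite_iUnion fun i => (ih i).image _

/-- Every node and every edge of a tree lies on a complete path. -/
lemma wf_and_attrs_subset_iff (t : DTree k) (s : Finset ℕ) :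
    t.wf ∧ t.attrs ⊆ s ↔ ∀ p ∈ t.paths, ∀ q ∈ p.1, q.1 ∈ s ∧ q.2 < k := by
  induction t with
  | leaf d => simp [wf, attrs, paths]
  | node a n lab ch ih =>
    simp only [mem_paths_node, wf, attrs, Finset.insert_subset_iff, Finset.biUnion_subset,
      Finset.mem_univ, true_implies]
    constructor
    · rintro ⟨⟨hlab, hwf⟩, ha, hattrs⟩ p ⟨i, q, hq, rfl⟩ x hx
      rcases List.mem_cons.mp hx with rfl | hx
      · exact ⟨ha, hlab i⟩
      · exact (ih i).mp ⟨hwf i, hattrs i⟩ q hq x hx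
    · intro h
      obtain ⟨q, hq⟩ := paths_nonempty (ch 0)
      have hhead := h _ ⟨0, q, hq, rfl⟩ _ List.mem_cons_self
      refine ⟨⟨fun i => ?_, fun i => ((ih i).mpr ?_).1⟩, hhead.1, fun i => ((ih i).mpr ?_).2⟩
      · obtain ⟨q, hq⟩ := paths_nonempty (ch i)
        exact (h _ ⟨i, q, hq, rfl⟩ _ List.mem_cons_self).2
      all_goals exact fun q hq x hx => h _ ⟨i, q, hq, rfl⟩ x (List.mem_cons_of_mem _ hx)

lemma ncard_paths_le_pow (hk : 1 ≤ k) {t : DTree k} (hwf : t.wf) (hdet : t.det) {d : ℕ}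
    (hd : ∀ p ∈ t.paths, p.1.length ≤ d) : t.paths.ncard ≤ k ^ d := by
  induction t generalizing d with
  | leaf d0 => simpa [paths] using Nat.one_le_pow _ _ hk
  | node a n lab ch ih =>
    have hchild : ∀ i, ∀ q ∈ (ch i).paths, q.1.length + 1 ≤ d := fun i q hq => by
      simpa using hd _ (mem_paths_node.mpr ⟨i, q, hq, rfl⟩)
    obtain ⟨q, hq⟩ := paths_nonempty (ch 0)
    obtain ⟨d, rfl⟩ : ∃ d', d = d' + 1 := Nat.exists_eq_add_one.mpr (by have := hchild 0 q hq; omega)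
    have hbranches : n + 1 ≤ k := by
      simpa using Fintype.card_le_of_injective (fun i => (⟨lab i, hwf.1 i⟩ : Fin k))
        fun i j h => hdet.1 (congrArg Fin.val h)
    calc (node a n lab ch).paths.ncard
        ≤ ∑ i, ((fun p : List (ℕ × ℕ) × ℕ => ((a, lab i) :: p.1, p.2)) '' (ch i).paths).ncard :=
          Set.ncard_iUnion_le_of_fintype _
      _ ≤ ∑ _i : Fin (n + 1), k ^ d := Finset.sum_le_sum fun i _ =>
          (Set.ncard_image_le (paths_finite _)).trans
            (ih i (hwf.2 i) (hdet.2 i) fun q hq => by have := hchild i q hq; omega)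
      _ ≤ k * k ^ d := by simpa using Nat.mul_le_mul_right _ hbranches
      _ = k ^ (d + 1) := (pow_succ' _ _).symm

def chain : List (ℕ × ℕ) → ℕ → DTree k
  | [], d => leaf d
  | q :: α, d => node q.1 0 (fun _ => q.2) fun _ => chain α d

lemma paths_chain (α : List (ℕ × ℕ)) (d : ℕ) : (chain α d : DTree k).paths = {(α, d)} := by
  induction α with
  | nil => rfl
  | cons q α ih =>
    ext p
    simp [chain, mem_paths_node, ih]

/-- `g` receives the word labelling the whole path. -/
def queryAll : List ℕ → (List (ℕ × ℕ) → ℕ) → DTree k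
  | [], g => leaf (g [])
  | a :: s, g => node a (k - 1) (fun i => i) fun i => queryAll s fun w => g ((a, i) :: w)

lemma mem_paths_queryAll (hk : 1 ≤ k) {s : List ℕ} {g : List (ℕ × ℕ) → ℕ}
    {p : List (ℕ × ℕ) × ℕ} (hp : p ∈ (queryAll s g : DTree k).paths) :
    p.1.map Prod.fst = s ∧ (∀ q ∈ p.1, q.2 < k) ∧ p.2 = g p.1 := by
  induction s generalizing g p with
  | nil =>
    obtain rfl : p = ([], g []) := hp
    simp
  | cons a s ih =>
    obtain ⟨i, q, hq, rfl⟩ := mem_paths_node.mp hp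
    obtain ⟨hfst, hlt, hdec⟩ := ih hq
    refine ⟨by simp [hfst], ?_, hdec⟩
    simp only [List.mem_cons, forall_eq_or_imp]
    exact ⟨by have := i.isLt; omega, hlt⟩

lemma queryAll_mem_paths (r : ℕ → ℕ) {s : List ℕ} (hr : ∀ a ∈ s, r a < k)
    (g : List (ℕ × ℕ) → ℕ) :
    (s.map fun a => (a, r a), g (s.map fun a => (a, r a))) ∈ (queryAll s g : DTree k).paths := by
  induction s generalizing g with
  | nil => rfl
  | cons a s ih =>
    have hra : r a < k - 1 + 1 := by have := hr a List.mem_cons_self; omega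
    exact mem_paths_node.mpr ⟨⟨r a, hra⟩, _, ih (fun b hb => hr b (List.mem_cons_of_mem _ hb)) _, rfl⟩

lemma queryAll_det (s : List ℕ) (g : List (ℕ × ℕ) → ℕ) : (queryAll s g : DTree k).det := by
  induction s generalizing g with
  | nil => trivial
  | cons a s ih => exact ⟨fun i j h => Fin.ext h, fun i => ih _⟩

end DTree

namespace KTree

variable {k : ℕ}

lemma paths_finite (Γ : KTree k) : Γ.paths.Finite :=
  Set.finite_iUnion fun i => (Γ.sub i).paths_finite

lemma wf_and_attrs_subset_iff (Γ : KTree k) (s : Finset ℕ) :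
    Γ.wf ∧ Γ.attrs ⊆ s ↔ ∀ p ∈ Γ.paths, ∀ q ∈ p.1, q.1 ∈ s ∧ q.2 < k := by
  simp only [wf, attrs, paths, Finset.biUnion_subset, Finset.mem_univ, true_implies,
    Set.mem_iUnion, forall_exists_index, ← forall_and, DTree.wf_and_attrs_subset_iff]
  exact forall_comm

/-- Repetitions among the subtrees below the root are allowed, so the subtrees can be indexed by
`Fin (s.card + 1)`. -/
lemma exists_paths_eq_biUnion {ι : Type*} {s : Finset ι} (hs : s.Nonempty) (t : ι → DTree k) :
    ∃ Γ : KTree k, Γ.paths = ⋃ i ∈ s, (t i).paths := by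
  obtain ⟨i₀, hi₀⟩ := hs
  refine ⟨⟨s.card, fun j => t (s.toList.getD j i₀)⟩, Set.ext fun p => ?_⟩
  simp only [paths, Set.mem_iUnion]
  constructor
  · rintro ⟨j, hp⟩
    refine ⟨_, ?_, hp⟩
    by_cases hj : (j : ℕ) < s.toList.length
    · rw [List.getD_eq_getElem _ _ hj]
      exact Finset.mem_toList.mp (List.getElem_mem _)
    · rwa [List.getD_eq_default _ _ (not_lt.mp hj)]
  · rintro ⟨i, hi, hp⟩
    obtain ⟨j, hj, rfl⟩ := List.mem_iff_getElem.mp (Finset.mem_toList.mpr hi)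
    refine ⟨⟨j, by simpa using hj.trans (Nat.lt_succ_self _)⟩, ?_⟩
    rwa [List.getD_eq_getElem _ _ hj]

lemma paths_eq_of_n_eq_zero {Γ : KTree k} (h : Γ.n = 0) : Γ.paths = (Γ.sub 0).paths := by
  have hzero : ∀ i : Fin (Γ.n + 1), i = 0 := fun i => Fin.ext (by have := i.isLt; simp; omega)
  simp only [paths]
  exact Set.iUnion_eq_const fun i => by rw [hzero i]

end KTree

section Trees

variable {k : ℕ}

lemma onWord_le_treeComp (ψ : PBCM) {Γ : KTree k} {p : List (ℕ × ℕ) × ℕ} (hp : p ∈ Γ.paths) :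
    ψ.onWord p.1 ≤ treeComp ψ Γ :=
  le_csSup ((Γ.paths_finite.image fun p : List (ℕ × ℕ) × ℕ => ψ.onWord p.1).bddAbove)
    ⟨p, hp, rfl⟩

lemma treeComp_le {ψ : PBCM} {Γ : KTree k} {n : ℕ} (h : ∀ p ∈ Γ.paths, ψ.onWord p.1 ≤ n) :
    treeComp ψ Γ ≤ n :=
  csSup_le' fun _ ⟨p, hp, hc⟩ => hc ▸ h p hp

lemma psiA_le_treeComp (ψ : PBCM) {T : Table k} {Γ : KTree k} (h : isNDT T Γ) :
    psiA ψ T ≤ treeComp ψ Γ :=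
  Nat.sInf_le ⟨Γ, h, rfl⟩

lemma psiD_le_treeComp (ψ : PBCM) {T : Table k} {Γ : KTree k} (h : isDDT T Γ) :
    psiD ψ T ≤ treeComp ψ Γ :=
  Nat.sInf_le ⟨Γ, h, rfl⟩

lemma isDDT.ncard_paths_le (hk : 1 ≤ k) (ψ : BCM) {T : Table k} {Γ : KTree k} (h : isDDT T Γ) :
    Γ.paths.ncard ≤ k ^ treeComp ψ.toPBCM Γ := by
  have hpaths := KTree.paths_eq_of_n_eq_zero h.2.1
  rw [hpaths]
  refine DTree.ncard_paths_le_pow hk (h.1.2.1 0) (h.2.2 0) fun p hp => ?_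
  calc p.1.length = (p.1.map Prod.fst).length := (List.length_map _).symm
    _ ≤ ψ.onWord p.1 := ψ.bdd _
    _ ≤ treeComp ψ.toPBCM Γ := onWord_le_treeComp _ (hpaths ▸ hp)

end Trees

section Covers

variable {k : ℕ} {ψ : PBCM} {n : ℕ} {T : Table k} {U : Finset (List (ℕ × ℕ))}

lemma exists_isIrredCover_subset (h : isCover ψ n T U) : ∃ V ⊆ U, isIrredCover ψ n T V := by
  obtain ⟨V, hVU, hV⟩ := exists_minimal_le_of_wellFoundedLT (isCover ψ n T) U h
  exact ⟨V, hVU, minimal_iff_forall_lt.mp hV⟩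

lemma isIrredCover.exists_private_row (h : isIrredCover ψ n T U) {α : List (ℕ × ℕ)}
    (hα : α ∈ U) : ∃ r ∈ T.rows, Table.rowSat r α ∧ ∀ β ∈ U, Table.rowSat r β → β = α := by
  by_contra! hcon
  refine h.2 (U.erase α) (Finset.erase_ssubset hα)
    ⟨fun β hβ => h.1.1 β (Finset.mem_of_mem_erase hβ), fun r hr => ?_⟩
  obtain ⟨β, hβ, hsat⟩ := h.1.2 r hr
  by_cases hβα : β = α
  · subst hβα
    obtain ⟨γ, hγ, hγsat, hγβ⟩ := hcon r hr hsat
    exact ⟨γ, Finset.mem_erase.mpr ⟨hγβ, hγ⟩, hγsat⟩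
  · exact ⟨β, Finset.mem_erase.mpr ⟨hβα, hβ⟩, hsat⟩

lemma isIrredCover.rows_nonempty (h : isIrredCover ψ n T U) (hU : U.Nonempty) :
    T.rows.Nonempty := by
  by_contra! hrows
  exact h.2 ∅ (Finset.empty_ssubset.mpr hU) ⟨by simp, by simp [hrows]⟩

lemma bddAbove_card_isIrredCover (ψ : BCM) (n : ℕ) (T : Table k) :
    BddAbove {c | ∃ U, isIrredCover ψ.toPBCM n T U ∧ U.card = c} := by
  refine ⟨{α : List (ℕ × ℕ) | α.length ≤ n ∧ ∀ q ∈ α, q ∈ T.attrs ×ˢ Finset.range k}.ncard, ?_⟩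
  rintro _ ⟨U, hU, rfl⟩
  rw [← Set.ncard_coe_finset]
  refine Set.ncard_le_ncard (fun α hα => ⟨?_, fun q hq => ?_⟩)
    (List.finite_setOf_length_le_of_forall_mem _ n)
  · simpa using (ψ.bdd _).trans (hU.1.1 α hα).2
  · obtain ⟨hattr, hval⟩ := (hU.1.1 α hα).1 q hq
    exact Finset.mem_product.mpr ⟨hattr, Finset.mem_range.mpr hval⟩

lemma card_le_lpsi (ψ : BCM) (h : isIrredCover ψ.toPBCM n T U) : U.card ≤ lpsi ψ.toPBCM T n :=
  le_csSup (bddAbove_card_isIrredCover ψ n T) ⟨U, h, rfl⟩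

lemma isNDT.exists_cover {Γ : KTree k} (hΓ : isNDT T Γ) (hn : treeComp ψ Γ ≤ n) :
    ∃ U, isCover ψ n T U ∧ ∀ α ∈ U, (T.applyWord α).hasCommon := by
  obtain ⟨-, hwf, hattrs, hcov, hdec⟩ := hΓ
  have hok := (Γ.wf_and_attrs_subset_iff T.attrs).mp ⟨hwf, hattrs⟩
  refine ⟨Γ.paths_finite.toFinset.image Prod.fst, ⟨?_, fun r hr => ?_⟩, ?_⟩
  · simp only [Finset.mem_image, Set.Finite.mem_toFinset]
    rintro _ ⟨p, hp, rfl⟩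
    exact ⟨hok p hp, (onWord_le_treeComp ψ hp).trans hn⟩
  · obtain ⟨p, hp, hsat⟩ := hcov r hr
    exact ⟨p.1, Finset.mem_image_of_mem _ (Γ.paths_finite.mem_toFinset.mpr hp), hsat⟩
  · simp only [Finset.mem_image, Set.Finite.mem_toFinset]
    rintro _ ⟨p, hp, rfl⟩
    rcases hdec p hp with hempty | hcommon
    · exact ⟨0, by simp [hempty]⟩
    · exact ⟨p.2, hcommon⟩

lemma psiA_le_of_cover (hne : T.rows.Nonempty) (hU : isCover ψ n T U)
    (hcom : ∀ α ∈ U, (T.applyWord α).hasCommon) : psiA ψ T ≤ n := by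
  obtain ⟨α₀, hα₀, -⟩ := hU.2 _ hne.choose_spec
  obtain ⟨Γ, hpaths⟩ := KTree.exists_paths_eq_biUnion (k := k) ⟨α₀, hα₀⟩ fun α =>
    DTree.chain α (T.applyWord α).commonDecision
  have hmem : ∀ {p}, p ∈ Γ.paths ↔ ∃ α ∈ U, p = (α, (T.applyWord α).commonDecision) := by
    simp [hpaths, DTree.paths_chain]
  obtain ⟨hwf, hattrs⟩ := (Γ.wf_and_attrs_subset_iff T.attrs).mpr fun p hp => by
    obtain ⟨α, hα, rfl⟩ := hmem.mp hp
    exact (hU.1 α hα).1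
  have hNDT : isNDT T Γ := by
    refine ⟨hne, hwf, hattrs, fun r hr => ?_, fun p hp => ?_⟩
    · obtain ⟨α, hα, hsat⟩ := hU.2 r hr
      exact ⟨_, hmem.mpr ⟨α, hα, rfl⟩, hsat⟩
    · obtain ⟨α, hα, rfl⟩ := hmem.mp hp
      exact Or.inr fun r hr => Table.commonDecision_mem (hcom α hα) hr
  refine (psiA_le_treeComp ψ hNDT).trans (treeComp_le fun p hp => ?_)
  obtain ⟨α, hα, rfl⟩ := hmem.mp hp
  exact (hU.1 α hα).2

lemma isCover.exists_attrList (hU : isCover ψ n T U) :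
    ∃ s : List ℕ, (∀ α ∈ U, ∀ q ∈ α, q.1 ∈ s) ∧ (∀ a ∈ s, a ∈ T.attrs) ∧
      ψ.toFun s ≤ n * U.card := by
  refine ⟨(U.toList.map fun α => α.map Prod.fst).flatten, fun α hα q hq => ?_, fun a ha => ?_, ?_⟩
  · exact List.mem_flatten.mpr
      ⟨_, List.mem_map.mpr ⟨α, Finset.mem_toList.mpr hα, rfl⟩, List.mem_map_of_mem hq⟩
  · obtain ⟨_, hl, hal⟩ := List.mem_flatten.mp ha
    obtain ⟨α, hα, rfl⟩ := List.mem_map.mp hl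
    obtain ⟨q, hq, rfl⟩ := List.mem_map.mp hal
    exact ((hU.1 α (Finset.mem_toList.mp hα)).1 q hq).1
  · refine (ψ.toFun_flatten_le _).trans ?_
    have hsum := List.sum_le_card_nsmul ((U.toList.map fun α => α.map Prod.fst).map ψ.toFun) n
      (by simpa [PBCM.onWord] using fun α hα => (hU.1 α hα).2)
    simpa [mul_comm] using hsum

/-- A row of `Tw` is covered by some `α ∈ U`, and every row of `Tw` agrees with it on the
attributes of `α`, so `Tw` is a subtable of `Tα`. -/
lemma isCover.hasCommon_applyWord (hU : isCover ψ n T U)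
    (hcom : ∀ α ∈ U, (T.applyWord α).hasCommon) {w : List (ℕ × ℕ)}
    (hw : ∀ α ∈ U, ∀ q ∈ α, q.1 ∈ w.map Prod.fst) : (T.applyWord w).hasCommon := by
  rcases (T.applyWord w).rows.eq_empty_or_nonempty with hempty | ⟨r, hr⟩
  · exact ⟨0, by simp [hempty]⟩
  obtain ⟨hrT, hrw⟩ := Finset.mem_filter.mp hr
  obtain ⟨α, hα, hrα⟩ := hU.2 r hrT
  refine Table.hasCommon_applyWord_of_subset (fun r' hr' => ?_) (hcom α hα)
  obtain ⟨hr'T, hr'w⟩ := Finset.mem_filter.mp hr'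
  exact Finset.mem_filter.mpr ⟨hr'T, Table.rowSat_of_agree hrw hr'w hrα (hw α hα)⟩

lemma exists_isDDT_of_cover (hk : 1 ≤ k) (hne : T.rows.Nonempty) (hU : isCover ψ n T U)
    (hcom : ∀ α ∈ U, (T.applyWord α).hasCommon) :
    ∃ Γ : KTree k, isDDT T Γ ∧ treeComp ψ Γ ≤ n * U.card := by
  obtain ⟨s, hUs, hsT, hψs⟩ := hU.exists_attrList
  let Γ : KTree k := ⟨0, fun _ => DTree.queryAll s fun w => (T.applyWord w).commonDecision⟩
  have hΓ : Γ.paths = (DTree.queryAll s fun w => (T.applyWord w).commonDecision).paths :=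
    KTree.paths_eq_of_n_eq_zero rfl
  have hpaths := fun {p} (hp : p ∈ Γ.paths) => DTree.mem_paths_queryAll hk (hΓ ▸ hp)
  obtain ⟨hwf, hattrs⟩ := (Γ.wf_and_attrs_subset_iff T.attrs).mpr fun p hp q hq => by
    obtain ⟨hfst, hval, -⟩ := hpaths hp
    exact ⟨hsT _ (hfst ▸ List.mem_map_of_mem hq), hval q hq⟩
  have hNDT : isNDT T Γ := by
    refine ⟨hne, hwf, hattrs, fun r hr => ⟨_, hΓ ▸ DTree.queryAll_mem_paths r
      (fun a ha => (T.rows_mem r hr).1 a (hsT a ha)) _, by simp [Table.rowSat]⟩, fun p hp => ?_⟩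
    obtain ⟨hfst, -, hdec⟩ := hpaths hp
    have hcommon := hU.hasCommon_applyWord hcom fun α hα q hq => hfst ▸ hUs α hα q hq
    exact Or.inr fun r hr => hdec ▸ Table.commonDecision_mem hcommon hr
  refine ⟨Γ, ⟨hNDT, rfl, fun _ => DTree.queryAll_det _ _⟩, treeComp_le fun p hp => ?_⟩
  rw [PBCM.onWord, (hpaths hp).1]
  exact hψs

end Covers

section Complexity

variable {k : ℕ}

lemma psiD_le_mul_lpsi (hk : 1 ≤ k) (ψ : BCM) {T : Table k} {n : ℕ}
    (h : psiA ψ.toPBCM T ≤ n) : psiD ψ.toPBCM T ≤ n * lpsi ψ.toPBCM T n := by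
  rcases Set.eq_empty_or_nonempty {c | ∃ Γ : KTree k, isNDT T Γ ∧ treeComp ψ.toPBCM Γ = c}
    with hnone | hsome
  · have hD : {c | ∃ Γ : KTree k, isDDT T Γ ∧ treeComp ψ.toPBCM Γ = c} = ∅ :=
      Set.eq_empty_of_subset_empty fun c ⟨Γ, hΓ, hc⟩ => hnone ▸ ⟨Γ, hΓ.1, hc⟩
    simp [psiD, hD]
  obtain ⟨Γ, hΓ, hc⟩ := Nat.sInf_mem hsome
  obtain ⟨U, hU, hcom⟩ := hΓ.exists_cover (hc.trans_le h)
  obtain ⟨V, hVU, hV⟩ := exists_isIrredCover_subset hU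
  obtain ⟨Γ', hΓ', hc'⟩ := exists_isDDT_of_cover hk hΓ.1 hV.1 fun α hα => hcom α (hVU hα)
  calc psiD ψ.toPBCM T ≤ n * V.card := (psiD_le_treeComp _ hΓ').trans hc'
    _ ≤ n * lpsi ψ.toPBCM T n := Nat.mul_le_mul_left n (card_le_lpsi ψ hV)

lemma HSet_subset_Iic (hk : 1 ≤ k) (ψ : BCM) {A : Set (Table k)} {n : ℕ}
    (hL : BddAbove (LSet ψ.toPBCM A n)) :
    HSet ψ.toPBCM A n ⊆ Set.Iic (n * Lfun ψ.toPBCM A n) := by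
  rintro _ ⟨T, hTA, hT, rfl⟩
  exact (psiD_le_mul_lpsi hk ψ hT).trans (Nat.mul_le_mul_left n (le_csSup hL ⟨T, hTA, rfl⟩))

/-- The path of a row satisfying only the word `α` of `U` must end in the decision coding `α`. -/
lemma isIrredCover.card_le_ncard_paths {ψ : PBCM} {n : ℕ} {T : Table k}
    {U : Finset (List (ℕ × ℕ))} (hU : isIrredCover ψ n T U) {Γ : KTree k}
    (hΓ : isNDT (T.labelByCover U hU.1.2) Γ) : U.card ≤ Γ.paths.ncard := by
  have hcodes : Encodable.encode '' (U : Set (List (ℕ × ℕ))) ⊆ Prod.snd '' Γ.paths := by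
    rintro _ ⟨α, hα, rfl⟩
    obtain ⟨r, hrT, hrα, hunique⟩ := hU.exists_private_row hα
    obtain ⟨p, hp, hrp⟩ := hΓ.2.2.2.1 r hrT
    have hr : r ∈ ((T.labelByCover U hU.1.2).applyWord p.1).rows :=
      Finset.mem_filter.mpr ⟨hrT, hrp⟩
    rcases hΓ.2.2.2.2 p hp with hempty | hcommon
    · simp [hempty] at hr
    obtain ⟨β, hβ, hβp⟩ := Finset.mem_image.mp (hcommon r hr)
    obtain ⟨hβU, hrβ⟩ := Finset.mem_filter.mp hβ
    exact ⟨p, hp, by rw [← hβp, hunique β hβU hrβ]⟩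
  calc U.card = (Encodable.encode '' (U : Set (List (ℕ × ℕ)))).ncard := by
        rw [Set.ncard_image_of_injective _ Encodable.encode_injective, Set.ncard_coe_finset]
    _ ≤ (Prod.snd '' Γ.paths).ncard := Set.ncard_le_ncard hcodes (Γ.paths_finite.image _)
    _ ≤ Γ.paths.ncard := Set.ncard_image_le Γ.paths_finite

lemma isIrredCover.card_le_pow_psiD (hk : 1 ≤ k) (ψ : BCM) {n : ℕ} {T : Table k}
    {U : Finset (List (ℕ × ℕ))} (hU : isIrredCover ψ.toPBCM n T U) (hne : T.rows.Nonempty) :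
    U.card ≤ k ^ psiD ψ.toPBCM (T.labelByCover U hU.1.2) := by
  set T' := T.labelByCover U hU.1.2
  obtain ⟨Γ₀, hΓ₀, -⟩ := exists_isDDT_of_cover (ψ := ψ.toPBCM) (T := T') hk hne hU.1
    fun _ hα => Table.hasCommon_labelByCover hU.1.2 hα
  obtain ⟨Γ, hΓ, hc⟩ :=
    Nat.sInf_mem (s := {c | ∃ Γ : KTree k, isDDT T' Γ ∧ treeComp ψ.toPBCM Γ = c}) ⟨_, Γ₀, hΓ₀, rfl⟩
  calc U.card ≤ Γ.paths.ncard := hU.card_le_ncard_paths hΓ.1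
    _ ≤ k ^ treeComp ψ.toPBCM Γ := hΓ.ncard_paths_le hk ψ
    _ = k ^ psiD ψ.toPBCM T' := by rw [hc, psiD]

end Complexity

theorem stmt8_general {k : ℕ} (hk : 2 ≤ k) (A : Set (Table k))
    (hclosed : IsClosedClass A) (ψ : BCM)
    (hL : ∀ n, (LSet ψ.toPBCM A n).Finite) :
    (∀ n, (HSet ψ.toPBCM A n).Finite) ∧
    ∀ n, 0 < Lfun ψ.toPBCM A n →
      Real.logb k (Lfun ψ.toPBCM A n : ℝ) ≤ (Hfun ψ.toPBCM A n : ℝ) := by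
  have hH : ∀ n, (HSet ψ.toPBCM A n).Finite := fun n =>
    (Set.finite_Iic _).subset (HSet_subset_Iic (by omega) ψ (hL n).bddAbove)
  refine ⟨hH, fun n hpos => ?_⟩
  obtain ⟨T, hTA, hT⟩ := Nat.sSup_mem_of_pos (hL n).bddAbove hpos
  obtain ⟨U, hU, hcard⟩ :=
    Nat.sSup_mem_of_pos (bddAbove_card_isIrredCover ψ n T) (by rwa [← lpsi, hT])
  have hcardL : U.card = Lfun ψ.toPBCM A n := hcard.trans hT
  have hne : T.rows.Nonempty := hU.rows_nonempty (Finset.card_pos.mp (hcardL ▸ hpos))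
  set T' := T.labelByCover U hU.1.2
  have hT'A : T' ∈ A := hclosed T hTA (Table.mem_closureT_of_rows_eq rfl rfl)
  have hT'a : psiA ψ.toPBCM T' ≤ n :=
    psiA_le_of_cover hne hU.1 fun _ hα => Table.hasCommon_labelByCover hU.1.2 hα
  have hLH : Lfun ψ.toPBCM A n ≤ k ^ Hfun ψ.toPBCM A n :=
    calc Lfun ψ.toPBCM A n = U.card := hcardL.symm
      _ ≤ k ^ psiD ψ.toPBCM T' := hU.card_le_pow_psiD (by omega) ψ hne
      _ ≤ k ^ Hfun ψ.toPBCM A n := Nat.pow_le_pow_right (by omega)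
          (le_csSup (hH n).bddAbove ⟨T', hT'A, hT'a, rfl⟩)
  rw [Real.logb_le_iff_le_rpow (by exact_mod_cast hk) (by exact_mod_cast hpos), Real.rpow_natCast]
  exact_mod_cast hLH

/-- **Lemma (7M2).** If `L_{ψ,A}` is everywhere defined then `H^∞_{ψ,A}` is everywhere
defined and, for any `n` with `L_{ψ,A}(n) > 0`, `H^∞_{ψ,A}(n) ≥ log_k L_{ψ,A}(n)`. -/
theorem stmt8 {k : ℕ} (hk : 2 ≤ k) (A : Set (Table k))
    (hclosed : IsClosedClass A) (hnontriv : NontrivialClass A) (ψ : BCM)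
    (hL : ∀ n, (LSet ψ.toPBCM A n).Finite) :
    (∀ n, (HSet ψ.toPBCM A n).Finite) ∧
    ∀ n, 0 < Lfun ψ.toPBCM A n →
      Real.logb k (Lfun ψ.toPBCM A n : ℝ) ≤ (Hfun ψ.toPBCM A n : ℝ) :=
  stmt8_general hk A hclosed ψ hL
end

section
/- Let k ∈ ℕ∖{0}, let f_{i₁},…,f_{i_n} ∈ {f₁,…,f_{m(k)}}, and let T = T_k^*(f_{i₁},0)⋯(f_{i_n},0). If T ≠ Λ, then r(T) ≥ max(1, k − n). -/
open Classical

/-!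
A row of `T_k^*(f_{i₁},0)⋯(f_{i_n},0)` is the characteristic tuple of a complete path of `G_k`
avoiding the nodes `i₁, …, i_n`, and its decision set is `{t}` for the terminal node `t` of that
path. So `r(T)` is at least the number of terminal nodes reachable by paths avoiding those nodes.
If `A` is the set of nodes of layer `j` reachable in this way, their children form a set of the
shape `B ∪ (B + 1)` with `|B| = |A|`, hence of size at least `|A| + 1`; the only children lost
are the removed nodes of layer `j + 1`. Starting from the root, at least `k - n` nodes of the
last layer therefore remain reachable.
-/

open Finset

theorem card_lt_card_union_image_add_one {A : Finset ℕ} (hA : A.Nonempty) :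
    #A < #(A ∪ A.image (· + 1)) := by
  refine card_lt_card ((ssubset_iff_of_subset subset_union_left).mpr ⟨A.max' hA + 1, ?_, ?_⟩)
  · exact mem_union_right _ (mem_image_of_mem _ (A.max'_mem hA))
  · exact fun h => by have := A.le_max' _ h; omega

theorem mem_allRows {k : ℕ} {s : Finset ℕ} {r : ℕ → ℕ} :
    r ∈ allRows k s ↔ (∀ i ∈ s, r i < k) ∧ ∀ i ∉ s, r i = 0 := by
  constructor
  · intro hr
    obtain ⟨f, hf, rfl⟩ := mem_image.mp hr
    exact ⟨fun i hi => by simpa [hi] using mem_pi.mp hf i hi, fun i hi => by simp [hi]⟩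
  · rintro ⟨hlt, hzero⟩
    refine mem_image.mpr ⟨fun i _ => r i, mem_pi.mpr fun i hi => mem_range.mpr (hlt i hi), ?_⟩
    funext i
    by_cases hi : i ∈ s <;> simp [hi, hzero]

theorem mnum_succ (n : ℕ) : mnum (n + 1) = mnum n + n + 1 := by
  have h : (n + 1) * (n + 1 + 1) = n * (n + 1) + 2 * (n + 1) := by ring
  rw [mnum, h, Nat.add_mul_div_left _ _ two_pos, ← mnum]
  ring

theorem mnum_mono : Monotone mnum :=
  monotone_nat_of_le_succ fun n => by rw [mnum_succ]; omega

theorem layer_eq_of_mem_Ioc {n i : ℕ} (hi : i ∈ Ioc (mnum n) (mnum (n + 1))) :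
    layer i = n + 1 := by
  rw [mem_Ioc] at hi
  refine (Nat.sInf_upward_closed_eq_succ_iff (fun _ _ h hm => le_trans hm (mnum_mono h)) n).mpr ?_
  exact ⟨hi.2, show ¬ i ≤ mnum n by omega⟩

section Paths

variable (c : ℕ → Bool)

theorem pathNode_succ_eq_or (j : ℕ) :
    pathNode c (j + 1) = lchild (pathNode c j) ∨ pathNode c (j + 1) = rchild (pathNode c j) := by
  cases h : c j <;> simp [pathNode, h]

theorem pathNode_mem_Ioc (j : ℕ) : pathNode c j ∈ Ioc (mnum j) (mnum (j + 1)) := by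
  induction j with
  | zero => simp [pathNode, mnum]
  | succ j ih =>
    have hlayer := layer_eq_of_mem_Ioc ih
    rw [mem_Ioc, mnum_succ (j + 1), mnum_succ j] at *
    rcases pathNode_succ_eq_or c j with h | h <;> simp only [h, lchild, rchild, hlayer] <;> omega

theorem layer_pathNode (j : ℕ) : layer (pathNode c j) = j + 1 :=
  layer_eq_of_mem_Ioc (pathNode_mem_Ioc c j)

theorem pathNode_mem_Icc {k j : ℕ} (hj : j < k) : pathNode c j ∈ Icc 1 (mnum k) := by
  have h := mem_Ioc.mp (pathNode_mem_Ioc c j)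
  have := mnum_mono (show j + 1 ≤ k by omega)
  exact mem_Icc.mpr ⟨by omega, by omega⟩

theorem pathNode_congr {c' : ℕ → Bool} {j : ℕ} (h : ∀ j' < j, c j' = c' j') :
    pathNode c j = pathNode c' j := by
  induction j with
  | zero => rfl
  | succ j ih =>
    simp only [pathNode, h j (Nat.lt_add_one j), ih fun j' hj' => h j' (by omega)]

theorem exists_pathNode_eq_of_child {j x : ℕ}
    (hx : x = lchild (pathNode c j) ∨ x = rchild (pathNode c j)) :
    ∃ c' : ℕ → Bool,
      (∀ j' ≤ j, pathNode c' j' = pathNode c j') ∧ pathNode c' (j + 1) = x := by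
  have hprefix (b : Bool) : ∀ j' ≤ j, pathNode (Function.update c j b) j' = pathNode c j' :=
    fun j' hj' => pathNode_congr _ fun j'' hj'' => Function.update_of_ne (by omega) _ _
  rcases hx with rfl | rfl
  · exact ⟨_, hprefix true, by simp [pathNode, hprefix true j le_rfl]⟩
  · exact ⟨_, hprefix false, by simp [pathNode, hprefix false j le_rfl]⟩

end Paths

/-- `δ(π)` for the complete path `π` of `G_k` that makes the choices `c`. -/
noncomputable def pathRow (k : ℕ) (c : ℕ → Bool) (i : ℕ) : ℕ :=
  if ∃ j < k, pathNode c j = i then 1 else 0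

theorem pathRow_eq_one_iff {k : ℕ} {c : ℕ → Bool} {i : ℕ} :
    pathRow k c i = 1 ↔ ∃ j < k, pathNode c j = i := by
  unfold pathRow
  split_ifs with h <;> simp [h]

theorem pathRow_mem_Tstar (k : ℕ) (c : ℕ → Bool) : pathRow k c ∈ (Tstar k).rows := by
  refine mem_filter.mpr
    ⟨mem_allRows.mpr ⟨fun i _ => ?_, fun i hi => ?_⟩, c, fun i _ => pathRow_eq_one_iff⟩
  · unfold pathRow; split_ifs <;> omega
  · refine if_neg ?_
    rintro ⟨j, hj, rfl⟩
    exact hi (pathNode_mem_Icc c hj)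

theorem exists_path_of_mem_Tstar {k : ℕ} {r : ℕ → ℕ} (hr : r ∈ (Tstar k).rows) :
    ∃ c : ℕ → Bool, ∀ j < k, r (pathNode c j) = 1 := by
  obtain ⟨-, c, hc⟩ := mem_filter.mp hr
  exact ⟨c, fun j hj => (hc _ (pathNode_mem_Icc c hj)).mpr ⟨j, hj, rfl⟩⟩

/-- An inner node of a path has a child on the path, and the root lies on every path. -/
theorem nuk_pathRow (j : ℕ) (c : ℕ → Bool) :
    nuk (j + 1) (pathRow (j + 1) c) = {pathNode c j} := by
  have hterminal := mem_Icc.mp (pathNode_mem_Icc c (Nat.lt_add_one j))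
  ext i
  simp only [nuk, mem_filter, mem_range, mem_singleton]
  constructor
  · rintro ⟨-, hi⟩
    split_ifs at hi with h0 hlast
    · have hroot : pathRow (j + 1) c 1 = 1 := pathRow_eq_one_iff.mpr ⟨0, j.succ_pos, rfl⟩
      omega
    · obtain ⟨j', hj', rfl⟩ := pathRow_eq_one_iff.mp hi
      rw [layer_pathNode] at hlast
      rw [show j' = j by omega]
    · obtain ⟨hon, hl, hr⟩ := hi
      obtain ⟨j', hj', rfl⟩ := pathRow_eq_one_iff.mp hon
      rw [layer_pathNode] at hlast
      have hnext : pathRow (j + 1) c (pathNode c (j' + 1)) = 1 :=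
        pathRow_eq_one_iff.mpr ⟨j' + 1, by omega, rfl⟩
      rcases pathNode_succ_eq_or c j' with h | h <;> rw [h] at hnext <;> omega
  · rintro rfl
    refine ⟨by omega, ?_⟩
    rw [if_neg (by omega), if_pos (layer_pathNode c j)]
    exact pathRow_eq_one_iff.mpr ⟨j, Nat.lt_add_one j, rfl⟩

noncomputable def reachAvoiding (L : List ℕ) (j : ℕ) : Finset ℕ :=
  {i ∈ Ioc (mnum j) (mnum (j + 1)) |
    ∃ c : ℕ → Bool, (∀ j' ≤ j, pathNode c j' ∉ L) ∧ pathNode c j = i}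

section Reach

variable {L : List ℕ} {j : ℕ}

theorem mem_reachAvoiding {i : ℕ} : i ∈ reachAvoiding L j ↔
    ∃ c : ℕ → Bool, (∀ j' ≤ j, pathNode c j' ∉ L) ∧ pathNode c j = i := by
  refine mem_filter.trans ⟨And.right, fun h => ⟨?_, h⟩⟩
  obtain ⟨c, -, rfl⟩ := h
  exact pathNode_mem_Ioc c j

theorem reachAvoiding_nonempty_of_succ (h : (reachAvoiding L (j + 1)).Nonempty) :
    (reachAvoiding L j).Nonempty := by
  obtain ⟨_, hi⟩ := h
  obtain ⟨c, hc, -⟩ := mem_reachAvoiding.mp hi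
  exact ⟨_, mem_reachAvoiding.mpr ⟨c, fun j' hj' => hc j' (by omega), rfl⟩⟩

theorem lchild_eq_of_mem_reachAvoiding {i : ℕ} (hi : i ∈ reachAvoiding L j) :
    lchild i = i + (j + 1) := by
  obtain ⟨c, -, rfl⟩ := mem_reachAvoiding.mp hi
  rw [lchild, layer_pathNode]

theorem child_mem_reachAvoiding_or {i x : ℕ} (hi : i ∈ reachAvoiding L j)
    (hx : x = lchild i ∨ x = rchild i) :
    x ∈ reachAvoiding L (j + 1) ∨ x ∈ {i ∈ L.toFinset | layer i = j + 2} := by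
  obtain ⟨c, hc, rfl⟩ := mem_reachAvoiding.mp hi
  obtain ⟨c', hprefix, hlast⟩ := exists_pathNode_eq_of_child c hx
  by_cases hxL : x ∈ L
  · refine .inr (mem_filter.mpr ⟨List.mem_toFinset.mpr hxL, ?_⟩)
    rw [← hlast, layer_pathNode]
  · refine .inl (mem_reachAvoiding.mpr ⟨c', fun j' hj' => ?_, hlast⟩)
    rcases Nat.lt_or_eq_of_le hj' with hj' | rfl
    · rw [hprefix j' (by omega)]
      exact hc j' (by omega)
    · rwa [hlast]

theorem card_reachAvoiding_add_one_le (h : (reachAvoiding L j).Nonempty) :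
    #(reachAvoiding L j) + 1 ≤
      #(reachAvoiding L (j + 1)) + #{i ∈ L.toFinset | layer i = j + 2} := by
  set B := (reachAvoiding L j).image (· + (j + 1))
  have hchildren : B ∪ B.image (· + 1) ⊆
      reachAvoiding L (j + 1) ∪ {i ∈ L.toFinset | layer i = j + 2} := by
    intro x hx
    simp only [B, mem_union, mem_image] at hx
    rw [mem_union]
    rcases hx with ⟨i, hi, rfl⟩ | ⟨_, ⟨i, hi, rfl⟩, rfl⟩
    · exact child_mem_reachAvoiding_or hi (.inl (lchild_eq_of_mem_reachAvoiding hi).symm)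
    · refine child_mem_reachAvoiding_or hi (.inr ?_)
      rw [rchild, ← lchild, lchild_eq_of_mem_reachAvoiding hi]
  calc #(reachAvoiding L j) + 1 = #B + 1 := by
        rw [card_image_of_injective _ (add_left_injective _)]
    _ ≤ #(B ∪ B.image (· + 1)) := card_lt_card_union_image_add_one (h.image _)
    _ ≤ _ := (card_le_card hchildren).trans (card_union_le _ _)

theorem le_card_reachAvoiding_add (h : (reachAvoiding L j).Nonempty) :
    j + 1 ≤ #(reachAvoiding L j) + #{i ∈ L.toFinset | layer i ≤ j + 1} := by
  induction j with
  | zero => have := h.card_pos; omega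
  | succ j ih =>
    have hprev := reachAvoiding_nonempty_of_succ h
    have hsplit : {i ∈ L.toFinset | layer i ≤ j + 1 + 1} =
        {i ∈ L.toFinset | layer i ≤ j + 1} ∪ {i ∈ L.toFinset | layer i = j + 2} := by
      rw [← filter_or]
      exact filter_congr fun _ _ => by omega
    rw [hsplit, card_union_of_disjoint (disjoint_filter.mpr fun _ _ hle heq => by omega)]
    have := card_reachAvoiding_add_one_le hprev
    have := ih hprev
    omega

theorem sub_length_le_card_reachAvoiding (h : (reachAvoiding L j).Nonempty) :
    j + 1 - L.length ≤ #(reachAvoiding L j) := by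
  have := le_card_reachAvoiding_add h
  have := (card_filter_le L.toFinset fun i => layer i ≤ j + 1).trans L.toFinset_card_le
  omega

end Reach

theorem mem_rows_applyWord_zeros {k : ℕ} {T : Table k} {L : List ℕ} {r : ℕ → ℕ} :
    r ∈ (T.applyWord (L.map fun i => (i, 0))).rows ↔ r ∈ T.rows ∧ ∀ i ∈ L, r i = 0 := by
  simp [Table.applyWord, Table.rowSat]

section Subtable

variable {L : List ℕ} {j : ℕ}

theorem reachAvoiding_nonempty_of_mem {r : ℕ → ℕ}
    (hr : r ∈ ((Tstar (j + 1)).applyWord (L.map fun i => (i, 0))).rows) :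
    (reachAvoiding L j).Nonempty := by
  obtain ⟨hrow, hzero⟩ := mem_rows_applyWord_zeros.mp hr
  obtain ⟨c, hc⟩ := exists_path_of_mem_Tstar hrow
  refine ⟨_, mem_reachAvoiding.mpr ⟨c, fun j' hj' hmem => ?_, rfl⟩⟩
  exact zero_ne_one ((hzero _ hmem).symm.trans (hc j' (by omega)))

theorem card_reachAvoiding_le_rnum :
    #(reachAvoiding L j) ≤ rnum (j + 1) ((Tstar (j + 1)).applyWord (L.map fun i => (i, 0))) := by
  rw [← card_image_of_injective _ singleton_injective]
  refine card_le_card fun s hs => ?_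
  obtain ⟨_, hi, rfl⟩ := mem_image.mp hs
  obtain ⟨c, hc, rfl⟩ := mem_reachAvoiding.mp hi
  refine mem_image.mpr ⟨pathRow (j + 1) c, ?_, nuk_pathRow j c⟩
  refine mem_rows_applyWord_zeros.mpr ⟨pathRow_mem_Tstar _ c, fun i hi => if_neg ?_⟩
  rintro ⟨j', hj', rfl⟩
  exact hc j' (by omega) hi

end Subtable

theorem stmt11_general (k : ℕ) (L : List ℕ)
    (hne : ((Tstar k).applyWord (L.map fun i => (i, 0))).rows ≠ ∅) :
    max 1 (k - L.length) ≤ rnum k ((Tstar k).applyWord (L.map fun i => (i, 0))) := by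
  obtain ⟨r, hr⟩ := nonempty_iff_ne_empty.mpr hne
  refine max_le (card_pos.mpr ⟨_, mem_image_of_mem _ hr⟩) ?_
  cases k with
  | zero => simp
  | succ k =>
    exact (sub_length_le_card_reachAvoiding (reachAvoiding_nonempty_of_mem hr)).trans
      card_reachAvoiding_le_rnum

/-- **Lemma (7M5).** Let `k ≥ 1`, `f_{i₁},…,f_{i_n} ∈ {f_1,…,f_{m(k)}}` and
`T = T_k^*(f_{i₁},0)⋯(f_{i_n},0)`. If `T ≠ Λ`, then `r(T) ≥ max(1, k − n)`. -/
theorem stmt11 (k : ℕ) (hk : 1 ≤ k) (L : List ℕ)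
    (hL : ∀ i ∈ L, i ∈ Finset.Icc 1 (mnum k))
    (hne : ((Tstar k).applyWord (L.map fun i => (i, 0))).rows ≠ ∅) :
    max 1 (k - L.length) ≤ rnum k ((Tstar k).applyWord (L.map fun i => (i, 0))) :=
  stmt11_general k L hne
end

section
/- For any nonempty decision table T ∈ M_2^∞, N(T) ≤ (4·W(T))^{Z(T)}. -/
open Classical

/-! Rows of a table over `E_2` are encoded by their sets of ones. A set of attributes shattered by
this family spans a complete table in `[T]`, so the VC dimension of the family is at most `Z(T)`,
and the Sauer–Shelah bound `N(T) ≤ ∑_{k ≤ Z(T)} (W(T) choose k)` is at most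
`(Z(T) + 1) W(T)^Z(T) ≤ (4 W(T))^Z(T)`. -/

open Finset

lemma Finset.card_le_sum_choose_vcDim {α : Type*} [DecidableEq α] {𝒜 : Finset (Finset α)}
    {s : Finset α} (h𝒜 : ∀ t ∈ 𝒜, t ⊆ s) : #𝒜 ≤ ∑ k ∈ Iic 𝒜.vcDim, (#s).choose k := by
  simp_rw [← card_powersetCard]
  refine (card_le_card_shatterer 𝒜).trans <|
    (card_le_card fun t ht ↦ mem_biUnion.2 ⟨#t, ?_⟩).trans card_biUnion_le
  obtain ⟨u, hu, htu⟩ := (mem_shatterer.1 ht).exists_superset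
  exact ⟨mem_Iic.2 (mem_shatterer.1 ht).card_le_vcDim,
    mem_powersetCard.2 ⟨htu.trans (h𝒜 u hu), rfl⟩⟩

lemma Nat.sum_Iic_choose_le_two_mul_pow {n d : ℕ} (hdn : d ≤ n) :
    ∑ k ∈ Iic d, n.choose k ≤ (2 * n) ^ d := by
  rcases Nat.eq_zero_or_pos n with rfl | hn
  · obtain rfl : d = 0 := by omega
    rfl
  calc ∑ k ∈ Iic d, n.choose k
      ≤ ∑ _k ∈ Iic d, n ^ d :=
        sum_le_sum fun k hk ↦ (choose_le_pow n k).trans (pow_le_pow_right₀ hn (mem_Iic.1 hk))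
    _ = (d + 1) * n ^ d := by rw [sum_const, card_Iic, smul_eq_mul]
    _ ≤ 2 ^ d * n ^ d := Nat.mul_le_mul_right _ d.lt_two_pow_self
    _ = (2 * n) ^ d := (mul_pow 2 n d).symm

namespace Table

variable {k : ℕ}

def rowSupport (T : Table k) (r : ℕ → ℕ) : Finset ℕ := T.attrs.filter fun i ↦ r i = 1

def supportFamily (T : Table k) : Finset (Finset ℕ) := T.rows.image T.rowSupport

noncomputable def restrict (T : Table k) (s : Finset ℕ) : Table k where
  attrs := T.attrs ∩ s
  rows := T.rows.image fun r i ↦ if i ∈ T.attrs ∩ s then r i else 0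
  -- membership in `[T]` puts no constraint on the decisions
  dec _ := {0}
  rows_mem := by
    simp only [mem_image, forall_exists_index, and_imp]
    rintro _ r hr rfl
    exact ⟨fun i hi ↦ by simpa [hi] using (T.rows_mem r hr).1 i (mem_inter.1 hi).1,
      fun i hi ↦ by simp [hi]⟩
  dec_nonempty _ _ := singleton_nonempty 0

lemma restrict_mem_closureT (T : Table k) (s : Finset ℕ) : T.restrict s ∈ T.closureT :=
  ⟨T.attrs \ s, sdiff_subset, sdiff_sdiff_right_self.symm, by
    simp only [restrict, sdiff_sdiff_right_self, inf_eq_inter]⟩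

lemma rowSupport_injOn (T : Table 2) : Set.InjOn T.rowSupport T.rows := by
  intro a ha b hb hab
  funext i
  by_cases hi : i ∈ T.attrs
  · have := congrArg (i ∈ ·) hab
    simp only [rowSupport, mem_filter, hi, true_and, eq_iff_iff] at this
    have := (T.rows_mem a ha).1 i hi
    have := (T.rows_mem b hb).1 i hi
    omega
  · rw [(T.rows_mem a ha).2 i hi, (T.rows_mem b hb).2 i hi]

lemma card_supportFamily (T : Table 2) : #T.supportFamily = T.NT :=
  card_image_of_injOn T.rowSupport_injOn

lemma subset_attrs_of_mem_supportFamily {T : Table k} {t : Finset ℕ}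
    (ht : t ∈ T.supportFamily) : t ⊆ T.attrs := by
  obtain ⟨r, -, rfl⟩ := mem_image.1 ht
  exact filter_subset _ _

lemma supportFamily_restrict (T : Table k) (s : Finset ℕ) :
    (T.restrict s).supportFamily = T.supportFamily.image ((T.attrs ∩ s) ∩ ·) := by
  simp only [supportFamily, restrict, image_image]
  refine image_congr fun r _ ↦ ?_
  ext i
  by_cases hA : i ∈ T.attrs <;> by_cases hs : i ∈ s <;> simp [rowSupport, hA, hs]

lemma subset_attrs_of_shatters {T : Table k} {s : Finset ℕ} (hs : T.supportFamily.Shatters s) :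
    s ⊆ T.attrs := by
  obtain ⟨t, ht, hst⟩ := hs.exists_superset
  exact hst.trans (subset_attrs_of_mem_supportFamily ht)

lemma isComplete_restrict_of_shatters {T : Table 2} {s : Finset ℕ}
    (hs : T.supportFamily.Shatters s) : isComplete (T.restrict s) := by
  have hsA : T.attrs ∩ s = s := inter_eq_right.2 (subset_attrs_of_shatters hs)
  show (T.restrict s).NT = 2 ^ #(T.attrs ∩ s)
  rw [hsA, ← card_supportFamily, supportFamily_restrict, hsA, shatters_iff.1 hs, card_powerset]

lemma WT_restrict_of_shatters {T : Table k} {s : Finset ℕ} (hs : T.supportFamily.Shatters s) :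
    (T.restrict s).WT = #s := by
  have hrows : (T.restrict s).rows.Nonempty := (image_nonempty.1 hs.nonempty).image _
  rw [WT, if_neg hrows.ne_empty]
  exact congrArg card (inter_eq_right.2 (subset_attrs_of_shatters hs))

lemma WT_le_card_attrs_of_mem_closureT {T Q : Table k} (hQ : Q ∈ T.closureT) :
    Q.WT ≤ #T.attrs := by
  obtain ⟨D, -, hQD, -⟩ := hQ
  unfold WT
  split_ifs
  · exact Nat.zero_le _
  · exact hQD ▸ card_le_card sdiff_subset

end Table

lemma card_attrs_mem_upperBounds (T : Table 2) :
    #T.attrs ∈ upperBounds {c | ∃ Q ∈ T.closureT, isComplete Q ∧ Q.WT = c} := by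
  rintro _ ⟨Q, hQ, -, rfl⟩
  exact Table.WT_le_card_attrs_of_mem_closureT hQ

lemma Zt_le_card_attrs (T : Table 2) : Zt T ≤ #T.attrs :=
  csSup_le' (card_attrs_mem_upperBounds T)

lemma card_le_Zt_of_shatters {T : Table 2} {s : Finset ℕ} (hs : T.supportFamily.Shatters s) :
    #s ≤ Zt T :=
  le_csSup ⟨_, card_attrs_mem_upperBounds T⟩ ⟨T.restrict s, T.restrict_mem_closureT s,
    Table.isComplete_restrict_of_shatters hs, Table.WT_restrict_of_shatters hs⟩

lemma vcDim_supportFamily_le_Zt (T : Table 2) : T.supportFamily.vcDim ≤ Zt T :=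
  Finset.sup_le fun _ hs ↦ card_le_Zt_of_shatters (mem_shatterer.1 hs)

/-- **Lemma (7M7).** For any nonempty table `T ∈ M_2^∞`, `N(T) ≤ (4·W(T))^{Z(T)}`. -/
theorem stmt13 (T : Table 2) (h : T.rows ≠ ∅) : T.NT ≤ (4 * T.WT) ^ Zt T := by
  have hW : T.WT = #T.attrs := if_neg h
  calc T.NT = #T.supportFamily := T.card_supportFamily.symm
    _ ≤ ∑ k ∈ Iic T.supportFamily.vcDim, (#T.attrs).choose k :=
        card_le_sum_choose_vcDim fun _ ↦ Table.subset_attrs_of_mem_supportFamily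
    _ ≤ ∑ k ∈ Iic (Zt T), (#T.attrs).choose k :=
        sum_le_sum_of_subset (Iic_subset_Iic.2 (vcDim_supportFamily_le_Zt T))
    _ ≤ (2 * #T.attrs) ^ Zt T := Nat.sum_Iic_choose_le_two_mul_pow (Zt_le_card_attrs T)
    _ ≤ (4 * T.WT) ^ Zt T := by rw [hW]; gcongr; norm_num
end
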